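/- Euler's transformation for the hypergeometric function: for |x| < 1 and admissible parameters, ₂F₁(σ1, σ2, σ3; x) = (1−x)^{σ3−σ1−σ2} · ₂F₁(σ3−σ1, σ3−σ2, σ3; x). -/

import Mathlib

/-- Pochhammer symbol `(z)ₙ = z (z+1) ⋯ (z+n-1)` for real `z`. -/
noncomputable def poch (z : ℝ) (n : ℕ) : ℝ := ∏ i ∈ Finset.range n, (z + i)

/-- Gauss hypergeometric function `₂F₁(σ1, σ2, σ3; x)` via its power series. -/
noncomputable def hyp2F1 (σ1 σ2 σ3 x : ℝ) : ℝ :=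
  ∑' n : ℕ, poch σ1 n * poch σ2 n / (poch σ3 n * n.factorial) * x ^ n

/-!
Expand `(1 - x)^(c - a - b) = ∑ (a + b - c)ₙ xⁿ / n!` by the binomial series and multiply it with
`₂F₁(c - a, c - b; c; x)` as a Cauchy product. The `n`-th coefficient of the product is then a
finite convolution, and it agrees with the `n`-th coefficient of `₂F₁(a, b; c; x)` because both
satisfy `(n + 1)(c + n) uₙ₊₁ = (a + n)(b + n) uₙ` with `u₀ = 1`. For the convolution this
recurrence follows by summing a Wilf–Zeilberger pair over the antidiagonal `k + j = n`.
-/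

open Filter Topology Finset Nat

lemma poch_succ (z : ℝ) (n : ℕ) : poch z (n + 1) = poch z n * (z + n) :=
  prod_range_succ _ _

lemma poch_eq_ascPochhammer_eval (z : ℝ) (n : ℕ) : poch z n = (ascPochhammer ℝ n).eval z := by
  induction n with
  | zero => simp [poch]
  | succ n ih => rw [poch_succ, ih, ascPochhammer_succ_eval]

lemma Ring.multichoose_eq_poch_div_factorial (t : ℝ) (n : ℕ) :
    Ring.multichoose t n = poch t n / n ! := by
  rw [eq_div_iff (by positivity), mul_comm, ← nsmul_eq_mul,
    Ring.factorial_nsmul_multichoose_eq_ascPochhammer, Polynomial.ascPochhammer_smeval_eq_eval,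
    poch_eq_ascPochhammer_eval]

lemma Ring.succ_mul_multichoose_succ (t : ℝ) (n : ℕ) :
    (n + 1) * Ring.multichoose t (n + 1) = (t + n) * Ring.multichoose t n := by
  simp only [Ring.multichoose_eq_poch_div_factorial, poch_succ, factorial_succ, cast_mul,
    cast_add, cast_one]
  field_simp

lemma hasSum_multichoose_mul_pow (t : ℝ) {x : ℝ} (hx : |x| < 1) :
    HasSum (fun n : ℕ => Ring.multichoose t n * x ^ n) ((1 - x) ^ (-t)) := by
  have h := (Real.one_div_one_sub_rpow_hasFPowerSeriesOnBall_zero t).hasSum (y := x)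
    (by simpa [Metric.mem_eball, edist_dist] using hx)
  rw [Real.rpow_neg (by linarith [(abs_lt.1 hx).2])]
  simpa [FormalMultilinearSeries.ofScalars_apply_eq, ← Ring.multichoose_eq, mul_comm] using h

lemma tendsto_add_div_add_atTop (p q : ℝ) :
    Tendsto (fun n : ℕ => (p + n) / (q + n)) atTop (𝓝 1) := by
  simpa using tendsto_add_mul_div_add_mul_atTop_nhds p q (1 : ℝ) one_ne_zero

lemma summable_norm_mul_pow_of_ratio_tendsto_one {f g : ℕ → ℝ} (hf : ∀ n, f (n + 1) = g n * f n)
    (hg : Tendsto g atTop (𝓝 1)) {x : ℝ} (hx : |x| < 1) :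
    Summable fun n => ‖f n * x ^ n‖ := by
  have hlt : |x| < (1 + |x|) / 2 := by linarith
  refine summable_of_ratio_norm_eventually_le (r := (1 + |x|) / 2) (by linarith) ?_
  have hev : ∀ᶠ n in atTop, |g n| * |x| < (1 + |x|) / 2 := by
    refine (hg.abs.mul_const |x|).eventually_lt_const ?_
    simpa using hlt
  filter_upwards [hev] with n hn
  have : ‖f (n + 1) * x ^ (n + 1)‖ = |g n| * |x| * ‖f n * x ^ n‖ := by
    simp only [hf, pow_succ, norm_mul, norm_pow, Real.norm_eq_abs]; ring
  rw [norm_norm, norm_norm, this]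
  exact mul_le_mul_of_nonneg_right hn.le (norm_nonneg _)

lemma summable_norm_multichoose_mul_pow (t : ℝ) {x : ℝ} (hx : |x| < 1) :
    Summable fun n => ‖Ring.multichoose t n * x ^ n‖ := by
  refine summable_norm_mul_pow_of_ratio_tendsto_one (fun n => ?_) (tendsto_add_div_add_atTop t 1) hx
  rw [div_mul_eq_mul_div, eq_div_iff (by positivity)]
  linear_combination Ring.succ_mul_multichoose_succ t n

theorem Finset.Nat.sum_antidiagonal_sub {M : Type*} [AddCommGroup M] (g : ℕ → ℕ → M)
    (n : ℕ) :
    ∑ p ∈ antidiagonal n, (g p.1 (p.2 + 1) - g (p.1 + 1) p.2) = g 0 (n + 1) - g (n + 1) 0 := by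
  rw [sum_sub_distrib, sub_eq_sub_iff_add_eq_add, add_comm,
    ← sum_antidiagonal_succ' (f := fun p => g p.1 p.2),
    sum_antidiagonal_succ (f := fun p => g p.1 p.2)]

noncomputable def hyp2F1Coeff (a b c : ℝ) (n : ℕ) : ℝ := poch a n * poch b n / (poch c n * n !)

lemma hyp2F1_eq_tsum (a b c x : ℝ) : hyp2F1 a b c x = ∑' n, hyp2F1Coeff a b c n * x ^ n := rfl

lemma hyp2F1Coeff_zero (a b c : ℝ) : hyp2F1Coeff a b c 0 = 1 := by simp [hyp2F1Coeff, poch]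

section Admissible

variable {c : ℝ}

lemma add_natCast_ne_zero_of_ne_neg_natCast (hc : ∀ m : ℕ, c ≠ -(m : ℝ)) (n : ℕ) :
    c + n ≠ 0 := fun h => hc n (eq_neg_of_add_eq_zero_left h)

lemma poch_ne_zero_of_ne_neg_natCast (hc : ∀ m : ℕ, c ≠ -(m : ℝ)) (n : ℕ) : poch c n ≠ 0 :=
  prod_ne_zero_iff.2 fun i _ => add_natCast_ne_zero_of_ne_neg_natCast hc i

lemma hyp2F1Coeff_succ (hc : ∀ m : ℕ, c ≠ -(m : ℝ)) (a b : ℝ) (n : ℕ) :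
    hyp2F1Coeff a b c (n + 1) = (a + n) * (b + n) / ((c + n) * (n + 1)) * hyp2F1Coeff a b c n := by
  have := poch_ne_zero_of_ne_neg_natCast hc n
  have := add_natCast_ne_zero_of_ne_neg_natCast hc n
  simp only [hyp2F1Coeff, poch_succ, factorial_succ, cast_mul, cast_add, cast_one]
  field_simp

lemma hyp2F1Coeff_recurrence (hc : ∀ m : ℕ, c ≠ -(m : ℝ)) (a b : ℝ) (n : ℕ) :
    (n + 1) * (c + n) * hyp2F1Coeff a b c (n + 1) = (a + n) * (b + n) * hyp2F1Coeff a b c n := by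
  have := add_natCast_ne_zero_of_ne_neg_natCast hc n
  rw [hyp2F1Coeff_succ hc]
  field_simp

lemma eq_hyp2F1Coeff_of_recurrence (hc : ∀ m : ℕ, c ≠ -(m : ℝ)) {a b : ℝ} {u : ℕ → ℝ}
    (h0 : u 0 = 1)
    (hu : ∀ n : ℕ, (n + 1) * (c + n) * u (n + 1) = (a + n) * (b + n) * u n) :
    u = hyp2F1Coeff a b c := by
  funext n
  induction n with
  | zero => rw [h0, hyp2F1Coeff_zero]
  | succ n ih =>
    have : ((n : ℝ) + 1) * (c + n) ≠ 0 :=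
      mul_ne_zero (by positivity) (add_natCast_ne_zero_of_ne_neg_natCast hc n)
    refine mul_left_cancel₀ this ?_
    rw [hu, ih, hyp2F1Coeff_recurrence hc]

lemma summable_norm_hyp2F1Coeff_mul_pow (hc : ∀ m : ℕ, c ≠ -(m : ℝ)) (a b : ℝ) {x : ℝ}
    (hx : |x| < 1) : Summable fun n => ‖hyp2F1Coeff a b c n * x ^ n‖ := by
  refine summable_norm_mul_pow_of_ratio_tendsto_one (hyp2F1Coeff_succ hc a b) ?_ hx
  have h := (tendsto_add_div_add_atTop a c).mul (tendsto_add_div_add_atTop b 1)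
  rw [one_mul] at h
  refine h.congr fun n => ?_
  have := add_natCast_ne_zero_of_ne_neg_natCast hc n
  field_simp
  ring

/-- A Wilf–Zeilberger pair: summed over `k + j = n`, the bracketed difference telescopes. -/
lemma hyp2F1Coeff_mul_multichoose_telescoping (hc : ∀ m : ℕ, c ≠ -(m : ℝ)) (a b : ℝ) (k j : ℕ) :
    let B := hyp2F1Coeff (c - a) (c - b) c
    let d := Ring.multichoose (a + b - c)
    (k + j + 1) * (c + (k + j)) * (B k * d (j + 1)) =
      (a + (k + j)) * (b + (k + j)) * (B k * d j) +
        (k * (c + k - 1) * B k * d (j + 1) - (k + 1) * (c + k) * B (k + 1) * d j) := by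
  intro B d
  have hB := hyp2F1Coeff_recurrence hc (c - a) (c - b) k
  have hd := Ring.succ_mul_multichoose_succ (a + b - c) j
  linear_combination (B k * (2 * k + j + c)) * hd + d j * hB

lemma sum_antidiagonal_hyp2F1Coeff_mul_multichoose (hc : ∀ m : ℕ, c ≠ -(m : ℝ)) (a b : ℝ)
    (n : ℕ) :
    ∑ p ∈ antidiagonal n, hyp2F1Coeff (c - a) (c - b) c p.1 * Ring.multichoose (a + b - c) p.2 =
      hyp2F1Coeff a b c n := by
  set B := hyp2F1Coeff (c - a) (c - b) c
  set d := Ring.multichoose (a + b - c)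
  suffices (fun n => ∑ p ∈ antidiagonal n, B p.1 * d p.2) = hyp2F1Coeff a b c from
    congrFun this n
  refine eq_hyp2F1Coeff_of_recurrence hc (by simp [B, d, hyp2F1Coeff_zero]) fun n => ?_
  set g : ℕ → ℕ → ℝ := fun k m => k * (c + k - 1) * B k * d m
  calc (n + 1) * (c + n) * ∑ p ∈ antidiagonal (n + 1), B p.1 * d p.2
      = (n + 1) * (c + n) * (B (n + 1) * d 0) + ∑ p ∈ antidiagonal n,
          (p.1 + p.2 + 1) * (c + (p.1 + p.2)) * (B p.1 * d (p.2 + 1)) := by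
        rw [sum_antidiagonal_succ', mul_add, mul_sum]
        congr 1
        refine sum_congr rfl fun p hp => ?_
        rw [← mem_antidiagonal.1 hp]
        push_cast
        ring
    _ = (n + 1) * (c + n) * (B (n + 1) * d 0) + ∑ p ∈ antidiagonal n,
          ((a + (p.1 + p.2)) * (b + (p.1 + p.2)) * (B p.1 * d p.2) +
            (g p.1 (p.2 + 1) - g (p.1 + 1) p.2)) := by
        congr 1
        refine sum_congr rfl fun p _ => ?_
        rw [hyp2F1Coeff_mul_multichoose_telescoping hc a b p.1 p.2]
        push_cast [g]
        ring
    _ = (n + 1) * (c + n) * (B (n + 1) * d 0) + ((a + n) * (b + n) *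
          ∑ p ∈ antidiagonal n, B p.1 * d p.2 + (g 0 (n + 1) - g (n + 1) 0)) := by
        rw [sum_add_distrib, Finset.Nat.sum_antidiagonal_sub, mul_sum]
        congr 2
        refine sum_congr rfl fun p hp => ?_
        rw [← mem_antidiagonal.1 hp]
        push_cast
        ring
    _ = (a + n) * (b + n) * ∑ p ∈ antidiagonal n, B p.1 * d p.2 := by
        simp only [g]
        push_cast
        ring

end Admissible

theorem hyp2F1_euler_transform (σ1 σ2 σ3 x : ℝ)
    (hσ3 : ∀ m : ℕ, σ3 ≠ -(m : ℝ)) (hx : |x| < 1) :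
    hyp2F1 σ1 σ2 σ3 x = (1 - x) ^ (σ3 - σ1 - σ2) * hyp2F1 (σ3 - σ1) (σ3 - σ2) σ3 x := by
  have hbinom : (1 - x) ^ (σ3 - σ1 - σ2) = ∑' n, Ring.multichoose (σ1 + σ2 - σ3) n * x ^ n := by
    rw [(hasSum_multichoose_mul_pow _ hx).tsum_eq, neg_sub, sub_sub]
  rw [hbinom, hyp2F1_eq_tsum, hyp2F1_eq_tsum, mul_comm,
    tsum_mul_tsum_eq_tsum_sum_antidiagonal_of_summable_norm
      (summable_norm_hyp2F1Coeff_mul_pow hσ3 _ _ hx) (summable_norm_multichoose_mul_pow _ hx)]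
  refine tsum_congr fun n => ?_
  rw [← sum_antidiagonal_hyp2F1Coeff_mul_multichoose hσ3 σ1 σ2 n, sum_mul]
  refine sum_congr rfl fun p hp => ?_
  rw [← mem_antidiagonal.1 hp, pow_add]
  ring
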